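/- arXiv:2412.10809 — 5 statements merged into one kernel-verified Lean document; each statement's English description precedes it below -/
import Mathlib

section
/- For the 3D point-feature SLAM, define for p^r, p^f ∈ ℝ³ the 9×9 block matrix A = [[I₃, 0, 0], [(p^r)^∧, I₃, 0], [(p^f)^∧, 0, I₃]], where v^∧ denotes the skew-symmetric matrix of v. Then A is invertible, and A maps the column span of the 9×6 matrix N(p^r, p^f) = [[I₃, 0], [-(p^r)^∧, I₃], [-(p^f)^∧, I₃]] onto the column span of the constant matrix N̄ = [[I₃, 0], [0, I₃], [0, I₃]], i.e. A·N(p^r, p^f) has the same column span as N̄. -/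
open Matrix

/-- The skew-symmetric (cross-product) matrix of v ∈ ℝ³. -/
def skew (v : Fin 3 → ℝ) : Matrix (Fin 3) (Fin 3) ℝ :=
  !![0, -v 2, v 1; v 2, 0, -v 0; -v 1, v 0, 0]

/-- The Aff-EKF v1 affine transformation for 3D point-feature SLAM. -/
def affineA (pr pf : Fin 3 → ℝ) :
    Matrix (Fin 3 ⊕ (Fin 3 ⊕ Fin 3)) (Fin 3 ⊕ (Fin 3 ⊕ Fin 3)) ℝ :=
  Matrix.fromBlocks 1 0 (Matrix.fromRows (skew pr) (skew pf))
    (Matrix.fromBlocks 1 0 0 1)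

/-- The unobservable-subspace basis of 3D point-feature SLAM in the standard atlas. -/
def unobsN (pr pf : Fin 3 → ℝ) :
    Matrix (Fin 3 ⊕ (Fin 3 ⊕ Fin 3)) (Fin 3 ⊕ Fin 3) ℝ :=
  Matrix.fromBlocks 1 0 (Matrix.fromRows (-(skew pr)) (-(skew pf)))
    (Matrix.fromRows 1 1)

/-- The constant unobservable subspace basis [[I,0],[0,I],[0,I]]. -/
def unobsNbar : Matrix (Fin 3 ⊕ (Fin 3 ⊕ Fin 3)) (Fin 3 ⊕ Fin 3) ℝ :=
  Matrix.fromBlocks 1 0 0 (Matrix.fromRows 1 1)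

/-- A is invertible and A·N(p^r,p^f) has the same column span as the constant N̄. -/
theorem affine_renders_unobservable_constant (pr pf : Fin 3 → ℝ) :
    IsUnit (affineA pr pf) ∧
      LinearMap.range ((affineA pr pf * unobsN pr pf).mulVecLin)
        = LinearMap.range unobsNbar.mulVecLin := by
  have hneg : Matrix.fromRows (-(skew pr)) (-(skew pf))
      = -(Matrix.fromRows (skew pr) (skew pf)) := by
    exact (Matrix.fromRows_neg _ _).symm
  have hAN : affineA pr pf * unobsN pr pf = unobsNbar := by
    unfold affineA unobsN unobsNbar
    rw [Matrix.fromBlocks_multiply, Matrix.fromBlocks_one]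
    simp only [Matrix.one_mul, Matrix.mul_one, Matrix.mul_zero, Matrix.zero_mul,
      add_zero, zero_add, hneg, add_neg_cancel]
  refine ⟨?_, by rw [hAN]⟩
  set C := Matrix.fromRows (skew pr) (skew pf) with hC
  have hmul : ∀ X : Matrix (Fin 3 ⊕ Fin 3) (Fin 3) ℝ,
      affineA pr pf * Matrix.fromBlocks 1 0 X 1 = Matrix.fromBlocks 1 0 (X + C) 1 := by
    intro X
    unfold affineA
    rw [Matrix.fromBlocks_one, Matrix.fromBlocks_multiply]
    simp only [Matrix.one_mul, Matrix.mul_one, Matrix.mul_zero, Matrix.zero_mul,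
      add_zero, zero_add, hC, add_comm]
  have hmul' : Matrix.fromBlocks 1 0 (-C) 1 * affineA pr pf = Matrix.fromBlocks 1 0 0 1 := by
    unfold affineA
    rw [Matrix.fromBlocks_one, Matrix.fromBlocks_multiply]
    simp only [Matrix.one_mul, Matrix.mul_one, Matrix.mul_zero, Matrix.zero_mul,
      add_zero, zero_add, neg_add_cancel, hC]
  refine isUnit_iff_exists.mpr ⟨Matrix.fromBlocks 1 0 (-C) 1, ?_, ?_⟩
  · rw [hmul, neg_add_cancel, Matrix.fromBlocks_one]
  · rw [hmul', Matrix.fromBlocks_one]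
end

section
/- For a norm vector n^f ∈ ℝ³ with ‖n^f‖ = 1, scalar d^f, and p^r ∈ ℝ³, define the 9×9 block matrix A = [[I₃, 0, 0], [(p^r)^∧, I₃, 0], [d^f(n^f)^∧ − n^f(n^f)ᵀ(p^r)^∧, −n^f(n^f)ᵀ, I₃]]. Then A is invertible, and A times the 9×6 matrix N = [[0, I₃], [I₃, −(p^r)^∧], [n^f(n^f)ᵀ, −d^f(n^f)^∧]] equals the constant matrix [[0, I₃], [I₃, 0], [0, 0]]. -/
/-!
With `S = (p^r)^∧`, `K = d^f (n^f)^∧` and `P = n^f (n^f)ᵀ`, the matrix `A` is block lower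
unitriangular, hence a unit. In `A * N` only the last block row is not read off directly, and it
vanishes by design: `-P + P = 0` and `(K - P S) + P S - K = 0`.
-/

open Matrix

/-- The Aff-EKF affine transformation for plane-feature SLAM. -/
def affineAplane (nf : Fin 3 → ℝ) (df : ℝ) (pr : Fin 3 → ℝ) :
    Matrix (Fin 3 ⊕ (Fin 3 ⊕ Fin 3)) (Fin 3 ⊕ (Fin 3 ⊕ Fin 3)) ℝ :=
  Matrix.fromBlocks 1 0
    (Matrix.fromRows (skew pr) (df • skew nf - Matrix.vecMulVec nf nf * skew pr))
    (Matrix.fromBlocks 1 0 (-(Matrix.vecMulVec nf nf)) 1)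

/-- The unobservable-subspace basis of plane-feature SLAM in the standard atlas. -/
def unobsNplane (nf : Fin 3 → ℝ) (df : ℝ) (pr : Fin 3 → ℝ) :
    Matrix (Fin 3 ⊕ (Fin 3 ⊕ Fin 3)) (Fin 3 ⊕ Fin 3) ℝ :=
  Matrix.fromBlocks 0 1
    (Matrix.fromRows 1 (Matrix.vecMulVec nf nf))
    (Matrix.fromRows (-(skew pr)) (-(df • skew nf)))

/-- The constant matrix [[0,I],[I,0],[0,0]]. -/
def unobsNbarPlane : Matrix (Fin 3 ⊕ (Fin 3 ⊕ Fin 3)) (Fin 3 ⊕ Fin 3) ℝ :=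
  Matrix.fromBlocks 0 1 (Matrix.fromRows 1 0) (Matrix.fromRows 0 0)

theorem fromBlocks_one_zero_mul_fromBlocks_zero_one {R l m₁ m₂ : Type*} [Ring R]
    [Fintype l] [Fintype m₁] [Fintype m₂] [DecidableEq l] [DecidableEq m₁] [DecidableEq m₂]
    (S : Matrix m₁ l R) (K : Matrix m₂ l R) (P : Matrix m₂ m₁ R) :
    (fromBlocks 1 0 (fromRows S (K - P * S)) (fromBlocks 1 0 (-P) 1) :
        Matrix (l ⊕ m₁ ⊕ m₂) (l ⊕ m₁ ⊕ m₂) R) *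
        (fromBlocks 0 1 (fromRows 1 P) (fromRows (-S) (-K)) : Matrix (l ⊕ m₁ ⊕ m₂) (m₁ ⊕ l) R) =
      fromBlocks 0 1 (fromRows 1 0) (fromRows 0 0) := by
  simp only [fromBlocks_multiply, fromBlocks_mul_fromRows, Matrix.mul_zero,
    Matrix.zero_mul, add_zero, zero_add, mul_one, Matrix.mul_one, Matrix.one_mul, Matrix.mul_neg,
    Matrix.neg_mul, neg_add_cancel, neg_zero, neg_neg, fromRows_zero, fromBlocks_inj, true_and]
  rw [add_eq_zero_iff_eq_neg, fromRows_neg, neg_neg]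
  congr 1
  abel

theorem affine_plane_renders_unobservable_constant_general
    (nf : Fin 3 → ℝ) (df : ℝ) (pr : Fin 3 → ℝ) :
    IsUnit (affineAplane nf df pr) ∧
      affineAplane nf df pr * unobsNplane nf df pr = unobsNbarPlane :=
  ⟨isUnit_fromBlocks_zero₁₂.mpr ⟨isUnit_one, isUnit_fromBlocks_zero₁₂.mpr ⟨isUnit_one, isUnit_one⟩⟩,
    fromBlocks_one_zero_mul_fromBlocks_zero_one _ _ _⟩

/-- For a unit normal n^f, A is invertible and A·N equals the constant matrix
[[0,I],[I,0],[0,0]]. -/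
theorem affine_plane_renders_unobservable_constant
    (nf : Fin 3 → ℝ) (hn : nf ⬝ᵥ nf = 1) (df : ℝ) (pr : Fin 3 → ℝ) :
    IsUnit (affineAplane nf df pr) ∧
      affineAplane nf df pr * unobsNplane nf df pr = unobsNbarPlane :=
  affine_plane_renders_unobservable_constant_general nf df pr
end

section
/- Let J = [[0, −1], [1, 0]]. For p^r, p^f ∈ ℝ², the column span of the 5×3 matrix [[1, 0], [Jp^r, I₂], [Jp^f, I₂]] properly contains the column span of the 5×2 matrix [[0₁ₓ₂], [I₂], [I₂]]; in particular, the first space has dimension 3 and the second has dimension 2. -/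
open Matrix

/-- Unobservable subspace basis of the underlying 2D point-feature SLAM system in the
standard atlas: [[1,0],[Jp^r,I₂],[Jp^f,I₂]] with J = [[0,-1],[1,0]]. -/
def Nfull (pr pf : Fin 2 → ℝ) : Matrix (Fin 5) (Fin 3) ℝ :=
  !![1, 0, 0;
     -(pr 1), 1, 0;
     pr 0, 0, 1;
     -(pf 1), 1, 0;
     pf 0, 0, 1]

/-- Unobservable subspace basis of the standard EKF model: [[0],[I₂],[I₂]]. -/
def Nekf : Matrix (Fin 5) (Fin 2) ℝ :=
  !![0, 0;
     1, 0;
     0, 1;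
     1, 0;
     0, 1]

lemma nekf_inj : Function.Injective Nekf.mulVecLin := by
  rw [← LinearMap.ker_eq_bot, LinearMap.ker_eq_bot']
  intro x hx
  have h1 := congrFun hx 1
  have h2 := congrFun hx 2
  simp [Nekf, mulVecLin_apply, mulVec, dotProduct, Fin.sum_univ_succ] at h1 h2
  funext i; fin_cases i <;> simpa

lemma nfull_inj (pr pf : Fin 2 → ℝ) : Function.Injective (Nfull pr pf).mulVecLin := by
  rw [← LinearMap.ker_eq_bot, LinearMap.ker_eq_bot']
  intro x hx
  have h0 := congrFun hx 0
  have h1 := congrFun hx 1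
  have h2 := congrFun hx 2
  simp [Nfull, mulVecLin_apply, mulVec, dotProduct, Fin.sum_univ_succ] at h0 h1 h2
  funext i; fin_cases i
  · simpa
  · simpa [h0] using h1
  · simpa [h0] using h2

/-- The unobservable subspace of the Std-EKF (dimension 2) is a proper subspace of the
unobservable subspace of the underlying 2D point-feature SLAM system (dimension 3). -/
theorem observability_discrepancy_2D (pr pf : Fin 2 → ℝ) :
    LinearMap.range Nekf.mulVecLin < LinearMap.range (Nfull pr pf).mulVecLin ∧
      Module.finrank ℝ (LinearMap.range (Nfull pr pf).mulVecLin) = 3 ∧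
      Module.finrank ℝ (LinearMap.range Nekf.mulVecLin) = 2 := by
  refine ⟨lt_of_le_of_ne ?_ ?_, ?_, ?_⟩
  · rintro _ ⟨x, rfl⟩
    refine ⟨![0, x 0, x 1], ?_⟩
    funext i
    fin_cases i <;>
      simp [Nfull, Nekf, mulVecLin_apply, mulVec, dotProduct, Fin.sum_univ_succ]
  · intro h
    have hmem : (Nfull pr pf).mulVecLin ![1, 0, 0] ∈ LinearMap.range Nekf.mulVecLin := by
      rw [h]; exact LinearMap.mem_range_self _ _
    obtain ⟨x, hx⟩ := hmem
    have h0 := congrFun hx 0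
    simp [Nfull, Nekf, mulVecLin_apply, mulVec, dotProduct, Fin.sum_univ_succ] at h0
  · rw [LinearMap.finrank_range_of_inj (nfull_inj pr pf)]
    simp
  · rw [LinearMap.finrank_range_of_inj nekf_inj]
    simp
end

section
/- For R ∈ SO(3) and p^r, p^f ∈ ℝ³ with p^f ≠ p^r, define H = Rᵀ[(p^f − p^r)^∧, −I₃, I₃] (a 3×9 matrix, acting on error coordinates (δθ, δp^r, δp^f)). Then the 9×6 matrix N = [[I₃, 0], [-(p^r)^∧, I₃], [-(p^f)^∧, I₃]] satisfies H·N = 0. -/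
/-! The Jacobian factors as `Rᵀ * [S, -1, 1]` with `S = (p^f − p^r)^∧`, and block multiplication
gives `[S, -1, 1] * N = [S + (p^r)^∧ − (p^f)^∧, 0]`. The hat map is linear, so the first block
vanishes as well. -/

open Matrix

/-- The observation Jacobian of the relative measurement z = Rᵀ(p^f − p^r) of 3D
point-feature SLAM in the standard atlas: H = Rᵀ[(p^f − p^r)^∧, −I₃, I₃]. -/
def obsH (R : Matrix (Fin 3) (Fin 3) ℝ) (pr pf : Fin 3 → ℝ) :
    Matrix (Fin 3) (Fin 3 ⊕ (Fin 3 ⊕ Fin 3)) ℝ :=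
  Rᵀ * Matrix.fromCols (skew (pf - pr)) (Matrix.fromCols (-1) 1)

theorem skew_sub (v w : Fin 3 → ℝ) : skew (v - w) = skew v - skew w := by
  ext i j
  fin_cases i <;> fin_cases j <;> simp [skew] <;> ring

theorem fromCols_neg_one_one_mul_fromBlocks {R m n : Type*} [Ring R] [Fintype m] [Fintype n]
    [DecidableEq m] [DecidableEq n] (S P Q : Matrix m n R) :
    (fromCols S (fromCols (-1) 1) : Matrix m (n ⊕ (m ⊕ m)) R) *
        (fromBlocks 1 0 (fromRows (-P) (-Q)) (fromRows 1 1) : Matrix (n ⊕ (m ⊕ m)) (n ⊕ m) R) =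
      fromCols (S + P - Q) 0 := by
  simp only [fromCols_mul_fromBlocks, fromCols_mul_fromRows, Matrix.mul_one, Matrix.mul_zero,
    Matrix.one_mul, Matrix.neg_mul, Matrix.mul_neg, neg_neg, zero_add]
  congr 1 <;> abel

theorem obsH_mul_unobsN_eq_zero_general
    (R : Matrix (Fin 3) (Fin 3) ℝ)
    (pr pf : Fin 3 → ℝ) :
    obsH R pr pf * unobsN pr pf = 0 := by
  rw [obsH, unobsN, Matrix.mul_assoc, fromCols_neg_one_one_mul_fromBlocks, skew_sub,
    sub_add_cancel, sub_self, fromCols_zero, Matrix.mul_zero]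

/-- The observation Jacobian annihilates the unobservable-subspace basis: H·N = 0. -/
theorem obsH_mul_unobsN_eq_zero
    (R : Matrix (Fin 3) (Fin 3) ℝ)
    (hR : R ∈ Matrix.specialOrthogonalGroup (Fin 3) ℝ)
    (pr pf : Fin 3 → ℝ) (hne : pf ≠ pr) :
    obsH R pr pf * unobsN pr pf = 0 :=
  obsH_mul_unobsN_eq_zero_general R pr pf
end

section
/- For R ∈ SO(3), unit vector n^f ∈ ℝ³, d^f ∈ ℝ, and p^r ∈ ℝ³ with d^f ≠ 0, define the plane-SLAM observation Jacobian H = Rᵀ[H₁, H₂, H₃] with H₁ = (d^f − (p^r)ᵀn^f)(n^f)^∧, H₂ = −n^f(n^f)ᵀ, H₃ = ((d^f − (p^r)ᵀn^f)I₃ − n^f(p^r)ᵀ + 2(n^f)ᵀp^r · n^f(n^f)ᵀ)/d^f. Then H annihilates the 9×6 matrix N = [[0, I₃], [I₃, −(p^r)^∧], [n^f(n^f)ᵀ, −d^f(n^f)^∧]], i.e. H·N = 0. -/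
/-!
On the translation columns of `N`, the coefficient of `n nᵀ` in `H₃ n nᵀ` collapses to `d`
because `nᵀ n = 1`, so `H₃ n nᵀ = n nᵀ` cancels `H₂ = -n nᵀ`. On the rotation columns the
`(d - pᵀn) n^∧` terms of `H₁` and `H₃` cancel, and what remains is `n nᵀ p^∧ + n (p × n)ᵀ`,
i.e. `n (n × p + p × n)ᵀ = 0` by antisymmetry of the cross product.
-/

open Matrix

/-- The observation Jacobian H = Rᵀ[H₁, H₂, H₃] of plane-feature SLAM. -/
noncomputable def obsHplane (R : Matrix (Fin 3) (Fin 3) ℝ) (nf : Fin 3 → ℝ) (df : ℝ)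
    (pr : Fin 3 → ℝ) : Matrix (Fin 3) (Fin 3 ⊕ (Fin 3 ⊕ Fin 3)) ℝ :=
  Rᵀ * Matrix.fromCols ((df - pr ⬝ᵥ nf) • skew nf)
    (Matrix.fromCols (-(Matrix.vecMulVec nf nf))
      (df⁻¹ • ((df - pr ⬝ᵥ nf) • (1 : Matrix (Fin 3) (Fin 3) ℝ)
          - Matrix.vecMulVec nf pr
          + (2 * (nf ⬝ᵥ pr)) • Matrix.vecMulVec nf nf)))

lemma vecMul_skew (a b : Fin 3 → ℝ) : a ᵥ* skew b = a ⨯₃ b := by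
  ext i
  fin_cases i <;> simp [skew, cross_apply, vecMul, dotProduct, Fin.sum_univ_three] <;> ring

lemma vecMulVec_mul_skew (a b c : Fin 3 → ℝ) :
    vecMulVec a b * skew c = vecMulVec a (b ⨯₃ c) := by
  rw [vecMulVec_mul, vecMul_skew]

section FeatureBlock

variable {nf pr : Fin 3 → ℝ} {df : ℝ}

lemma obsHplane_featureBlock_mul_vecMulVec_self (hn : nf ⬝ᵥ nf = 1) (hd : df ≠ 0) :
    (df⁻¹ • ((df - pr ⬝ᵥ nf) • (1 : Matrix (Fin 3) (Fin 3) ℝ) - vecMulVec nf pr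
        + (2 * (nf ⬝ᵥ pr)) • vecMulVec nf nf)) * vecMulVec nf nf = vecMulVec nf nf := by
  simp only [smul_mul, add_mul, sub_mul, one_mul, vecMulVec_mul_vecMulVec, hn, one_smul,
    vecMulVec_smul, dotProduct_comm pr nf]
  match_scalars
  field_simp
  ring

lemma obsHplane_featureBlock_mul_skew (hd : df ≠ 0) :
    (df⁻¹ • ((df - pr ⬝ᵥ nf) • (1 : Matrix (Fin 3) (Fin 3) ℝ) - vecMulVec nf pr
        + (2 * (nf ⬝ᵥ pr)) • vecMulVec nf nf)) * -(df • skew nf) =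
      vecMulVec nf (pr ⨯₃ nf) - (df - pr ⬝ᵥ nf) • skew nf := by
  simp only [Matrix.mul_neg, Matrix.mul_smul, smul_mul, add_mul, sub_mul, one_mul,
    vecMulVec_mul_skew, cross_self, vecMulVec_zero, smul_zero, add_zero]
  match_scalars
  · field_simp
  · field_simp

end FeatureBlock

theorem obsHplane_mul_unobsNplane_eq_zero_general
    (R : Matrix (Fin 3) (Fin 3) ℝ)
    (nf : Fin 3 → ℝ) (hn : nf ⬝ᵥ nf = 1)
    (df : ℝ) (hd : df ≠ 0) (pr : Fin 3 → ℝ) :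
    obsHplane R nf df pr * unobsNplane nf df pr = 0 := by
  have cross_terms_cancel : vecMulVec nf nf * skew pr + vecMulVec nf (pr ⨯₃ nf) = 0 := by
    rw [vecMulVec_mul_skew, ← vecMulVec_add, cross_anticomm', vecMulVec_zero]
  rw [obsHplane, unobsNplane, Matrix.mul_assoc, fromCols_mul_fromBlocks, fromCols_mul_fromRows,
    fromCols_mul_fromRows, obsHplane_featureBlock_mul_vecMulVec_self hn hd,
    obsHplane_featureBlock_mul_skew hd]
  rw [Matrix.mul_zero, Matrix.mul_one, Matrix.mul_one, neg_mul_neg, zero_add, neg_add_cancel,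
    add_left_comm, add_sub_cancel, cross_terms_cancel, fromCols_zero, Matrix.mul_zero]

/-- The plane-SLAM observation Jacobian annihilates the unobservable-subspace basis. -/
theorem obsHplane_mul_unobsNplane_eq_zero
    (R : Matrix (Fin 3) (Fin 3) ℝ)
    (hR : R ∈ Matrix.specialOrthogonalGroup (Fin 3) ℝ)
    (nf : Fin 3 → ℝ) (hn : nf ⬝ᵥ nf = 1)
    (df : ℝ) (hd : df ≠ 0) (pr : Fin 3 → ℝ) :
    obsHplane R nf df pr * unobsNplane nf df pr = 0 :=
  obsHplane_mul_unobsNplane_eq_zero_general R nf hn df hd pr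
end
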